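/- For a word x in Z_m^n chosen uniformly at random, the expected value of the sum of the lengths of all maximal alternating segments of x equals n + (n-2)(m-1)(m-2)/m^2. -/

import Mathlib

open Finset

/-- The (0-indexed, inclusive) segment `x_i,…,x_j` is alternating, i.e. of the
form `abab…` : adjacent symbols differ and the segment has period 2. -/
def IsAltOn {m : ℕ} (x : ℕ → Fin m) (i j : ℕ) : Prop :=
  (∀ k ∈ Finset.Ico i j, x k ≠ x (k + 1)) ∧ ∀ k ∈ Finset.Ico i (j - 1), x k = x (k + 2)

instance {m : ℕ} (x : ℕ → Fin m) (i j : ℕ) : Decidable (IsAltOn x i j) :=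
  inferInstanceAs (Decidable (_ ∧ _))

/-- The set of (0-indexed, inclusive) index pairs of maximal alternating segments
of the word `x_0,…,x_{n-1}`. -/
def altSegs {m : ℕ} (n : ℕ) (x : ℕ → Fin m) : Finset (ℕ × ℕ) :=
  (Finset.range n ×ˢ Finset.range n).filter (fun p => p.1 ≤ p.2 ∧ IsAltOn x p.1 p.2 ∧
    (p.1 = 0 ∨ ¬ IsAltOn x (p.1 - 1) p.2) ∧ (p.2 = n - 1 ∨ ¬ IsAltOn x p.1 (p.2 + 1)))

/-- `a(x)` : the number of maximal alternating segments of `x_0,…,x_{n-1}`. -/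
def aCount {m : ℕ} (n : ℕ) (x : ℕ → Fin m) : ℕ := (altSegs n x).card

/-- `∑ s_i` : the sum of the lengths of the maximal alternating segments. -/
def sumLen {m : ℕ} (n : ℕ) (x : ℕ → Fin m) : ℕ := ∑ p ∈ altSegs n x, (p.2 - p.1 + 1)

/-- `∑ s_i²` : the sum of the squares of the lengths of the maximal alternating segments. -/
def sumLenSq {m : ℕ} (n : ℕ) (x : ℕ → Fin m) : ℕ := ∑ p ∈ altSegs n x, (p.2 - p.1 + 1) ^ 2

/-- `ρ(x)` : the number of runs of the word `x_0,…,x_{n-1}`. -/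
def rho {m : ℕ} (n : ℕ) (x : ℕ → Fin m) : ℕ :=
  1 + ((Finset.range (n - 1)).filter (fun i => x i ≠ x (i + 1))).card

/-- `h(x)` : the length of the first maximal alternating segment of `x_0,…,x_{n-1}`. -/
def headAlt {m : ℕ} (n : ℕ) (x : ℕ → Fin m) : ℕ :=
  ((Finset.range n).filter (fun j => IsAltOn x 0 j)).card

/-- `t(x)` : the length of the last maximal alternating segment of `x_0,…,x_{n-1}`. -/
def tailAlt {m : ℕ} (n : ℕ) (x : ℕ → Fin m) : ℕ :=
  ((Finset.range n).filter (fun j => IsAltOn x (n - 1 - j) (n - 1))).card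

/-- Extend a word of length `n` to a function `ℕ → Fin m` (junk value `0` beyond `n`). -/
def extWord {m : ℕ} (n : ℕ) (hm : 0 < m) (y : Fin n → Fin m) : ℕ → Fin m :=
  fun i => if h : i < n then y ⟨i, h⟩ else ⟨0, hm⟩

/-- The FLL ball of radius 1 around `x` : all words `y` of length `n` sharing with `x`
a common subsequence of length `n - 1` (equivalently, `d_l(x,y) ≤ 1`). -/
def L1ball {m : ℕ} (n : ℕ) (x : Fin n → Fin m) : Set (Fin n → Fin m) :=
  {y | ∃ z : List (Fin m), z.length = n - 1 ∧ z.Sublist (List.ofFn x) ∧ z.Sublist (List.ofFn y)}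

/-- `|L_1(x)|` : the size of the FLL ball of radius 1 around `x`. -/
noncomputable def L1size {m : ℕ} (n : ℕ) (x : Fin n → Fin m) : ℕ := (L1ball n x).ncard

/-- `f_n(y)` for binary words `y` of length `len` : `ρ(y)·n - (1/2)∑ s_j²`. -/
noncomputable def fB (n len : ℕ) (y : ℕ → Fin 2) : ℝ :=
  (rho len y : ℝ) * n - (sumLenSq len y : ℝ) / 2

/-- `f_{m,n}(y)` for words `y` of length `len` over `Z_m` :
`ρ(y)(mn-n-1) - (1/2)∑ s_j² + (3/2)∑ s_j - a(y)`. -/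
noncomputable def fM (m n len : ℕ) (y : ℕ → Fin m) : ℝ :=
  (rho len y : ℝ) * ((m : ℝ) * n - n - 1) - (sumLenSq len y : ℝ) / 2
    + 3 / 2 * (sumLen len y : ℝ) - (aCount len y : ℝ)

/-!
Every position of a word lies in exactly one maximal alternating segment, except an interior
position `k` with `x (k - 1)`, `x k`, `x (k + 1)` pairwise distinct: there the maximal segment
ending at `k` and the one starting at `k` overlap. Hence `∑ sᵢ` is `n` plus the number of such
positions, and by linearity of expectation `E ∑ sᵢ = n + (n - 2) · m(m - 1)(m - 2) / m³`.
-/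

def ThreeDistinctAt {α : Type*} (x : ℕ → α) (k : ℕ) : Prop :=
  x (k - 1) ≠ x k ∧ x k ≠ x (k + 1) ∧ x (k - 1) ≠ x (k + 1)

instance {α : Type*} [DecidableEq α] (x : ℕ → α) (k : ℕ) : Decidable (ThreeDistinctAt x k) :=
  inferInstanceAs (Decidable (_ ∧ _))

section Alternating

variable {m n : ℕ} {x : ℕ → Fin m} {i j k : ℕ}

theorem isAltOn_iff : IsAltOn x i j ↔
    (∀ l, i ≤ l → l < j → x l ≠ x (l + 1)) ∧ ∀ l, i ≤ l → l + 2 ≤ j → x l = x (l + 2) := by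
  simp only [IsAltOn, mem_Ico, and_imp, Nat.lt_sub_iff_add_lt]
  rfl

theorem IsAltOn.ne_succ {l : ℕ} (h : IsAltOn x i j) (hil : i ≤ l) (hlj : l < j) :
    x l ≠ x (l + 1) :=
  (isAltOn_iff.1 h).1 l hil hlj

theorem IsAltOn.eq_add_two {l : ℕ} (h : IsAltOn x i j) (hil : i ≤ l) (hlj : l + 2 ≤ j) :
    x l = x (l + 2) :=
  (isAltOn_iff.1 h).2 l hil hlj

theorem isAltOn_self (x : ℕ → Fin m) (k : ℕ) : IsAltOn x k k :=
  isAltOn_iff.2 ⟨fun _ _ _ => by omega, fun _ _ _ => by omega⟩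

theorem IsAltOn.mono {i' j' : ℕ} (h : IsAltOn x i j) (hi : i ≤ i') (hj : j' ≤ j) :
    IsAltOn x i' j' :=
  isAltOn_iff.2 ⟨fun _ hl hl' => h.ne_succ (by omega) (by omega),
    fun _ hl hl' => h.eq_add_two (by omega) (by omega)⟩

theorem IsAltOn.glue (hik : IsAltOn x i k) (hkj : IsAltOn x k j)
    (hk : i = k ∨ j = k ∨ x (k - 1) = x (k + 1)) : IsAltOn x i j := by
  refine isAltOn_iff.2 ⟨fun l hil hlj => ?_, fun l hil hlj => ?_⟩
  · rcases lt_or_ge l k with hlk | hkl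
    · exact hik.ne_succ hil hlk
    · exact hkj.ne_succ hkl hlj
  · rcases lt_or_ge (l + 1) k with hlk | hkl
    · exact hik.eq_add_two hil hlk
    rcases hkl.eq_or_lt with rfl | hkl
    · rcases hk with hk | hk | hk
      · omega
      · omega
      · simpa using hk
    · exact hkj.eq_add_two (by omega) hlj

theorem IsAltOn.eq_of_lt_of_lt (h : IsAltOn x i j) (hik : i < k) (hkj : k < j) :
    x (k - 1) = x (k + 1) := by
  have := h.eq_add_two (l := k - 1) (by omega) (by omega)
  rwa [show k - 1 + 2 = k + 1 by omega] at this

variable (x) in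
def altLeft (k : ℕ) : ℕ := Nat.find (⟨k, isAltOn_self x k⟩ : ∃ i, IsAltOn x i k)

variable (x) in
def altRight (n k : ℕ) : ℕ := Nat.findGreatest (IsAltOn x k) (n - 1)

theorem isAltOn_altLeft : IsAltOn x (altLeft x k) k :=
  Nat.find_spec (⟨k, isAltOn_self x k⟩ : ∃ i, IsAltOn x i k)

theorem altLeft_le (h : IsAltOn x i j) (hkj : k ≤ j) : altLeft x k ≤ i :=
  Nat.find_min' _ (h.mono le_rfl hkj)

theorem altLeft_le_self : altLeft x k ≤ k :=
  altLeft_le (isAltOn_self x k) le_rfl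

theorem altLeft_lt_self_iff : altLeft x k < k ↔ 0 < k ∧ x (k - 1) ≠ x k := by
  constructor
  · intro h
    have := (isAltOn_altLeft (x := x) (k := k)).ne_succ (l := k - 1) (by omega) (by omega)
    exact ⟨by omega, by rwa [Nat.sub_add_cancel (by omega)] at this⟩
  · rintro ⟨hk, hne⟩
    have : IsAltOn x (k - 1) k := by
      refine isAltOn_iff.2 ⟨fun l _ _ => ?_, fun _ _ _ => by omega⟩
      obtain rfl : l = k - 1 := by omega
      rwa [Nat.sub_add_cancel hk]
    exact (altLeft_le this le_rfl).trans_lt (by omega)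

theorem isAltOn_altRight (hk : k < n) : IsAltOn x k (altRight x n k) :=
  Nat.findGreatest_spec (m := k) (by omega) (isAltOn_self x k)

theorem altRight_le : altRight x n k ≤ n - 1 :=
  Nat.findGreatest_le _

theorem le_altRight (h : IsAltOn x i j) (hik : i ≤ k) (hjn : j < n) :
    j ≤ altRight x n k :=
  Nat.le_findGreatest (by omega) (h.mono hik le_rfl)

theorem self_le_altRight (hk : k < n) : k ≤ altRight x n k :=
  le_altRight (isAltOn_self x k) le_rfl hk

theorem self_lt_altRight_iff : k < altRight x n k ↔ k + 1 < n ∧ x k ≠ x (k + 1) := by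
  constructor
  · intro h
    have hR : altRight x n k ≤ n - 1 := altRight_le
    exact ⟨by omega, (isAltOn_altRight (by omega)).ne_succ le_rfl h⟩
  · rintro ⟨hkn, hne⟩
    have : IsAltOn x k (k + 1) := by
      refine isAltOn_iff.2 ⟨fun l _ _ => ?_, fun _ _ _ => by omega⟩
      obtain rfl : l = k := by omega
      exact hne
    exact (le_altRight this le_rfl hkn).trans_lt' (by omega)

theorem mem_altSegs_iff : (i, j) ∈ altSegs n x ↔ i ≤ j ∧ j < n ∧ IsAltOn x i j ∧
    ∀ i' j', i' ≤ i → j ≤ j' → j' < n → IsAltOn x i' j' → i' = i ∧ j' = j := by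
  simp only [altSegs, mem_filter, mem_product, mem_range]
  constructor
  · rintro ⟨⟨-, hjn⟩, hij, h, hleft, hright⟩
    refine ⟨hij, hjn, h, fun i' j' hi hj hjn' h' => ⟨?_, ?_⟩⟩
    · by_contra hne
      rcases hleft with h0 | hleft
      · omega
      · exact hleft (h'.mono (by omega) hj)
    · by_contra hne
      rcases hright with h0 | hright
      · omega
      · exact hright (h'.mono hi (by omega))
  · rintro ⟨hij, hjn, h, hmax⟩
    refine ⟨⟨by omega, hjn⟩, hij, h, or_iff_not_imp_left.2 fun hi h' => ?_,
      or_iff_not_imp_left.2 fun hj h' => ?_⟩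
    · have := (hmax _ _ (Nat.sub_le i 1) le_rfl hjn h').1
      omega
    · have := (hmax _ _ le_rfl (Nat.le_succ j) (by omega) h').2
      omega

theorem filter_altSegs_eq_singleton (hk : k < n)
    (hglue : altLeft x k = k ∨ altRight x n k = k ∨ x (k - 1) = x (k + 1)) :
    {p ∈ altSegs n x | p.1 ≤ k ∧ k ≤ p.2} = {(altLeft x k, altRight x n k)} := by
  have hLR := (isAltOn_altLeft (x := x) (k := k)).glue (isAltOn_altRight hk) hglue
  have hLk : altLeft x k ≤ k := altLeft_le_self
  have hkR : k ≤ altRight x n k := self_le_altRight hk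
  have hRn : altRight x n k < n := altRight_le.trans_lt (by omega)
  ext ⟨i, j⟩
  simp only [mem_filter, mem_singleton, mem_altSegs_iff, Prod.mk.injEq]
  constructor
  · rintro ⟨⟨-, hjn, h, hmax⟩, hik, hkj⟩
    have := hmax _ _ (altLeft_le h hkj) (le_altRight h hik hjn) hRn hLR
    omega
  · rintro ⟨rfl, rfl⟩
    refine ⟨⟨by omega, hRn, hLR, fun i' j' hi hj hjn h => ?_⟩, hLk, hkR⟩
    have := altLeft_le h (hkR.trans hj)
    have := le_altRight h (hi.trans hLk) hjn
    omega

theorem filter_altSegs_eq_pair (hk : k ∈ Ioo 0 (n - 1)) (hx : ThreeDistinctAt x k) :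
    {p ∈ altSegs n x | p.1 ≤ k ∧ k ≤ p.2} = {(altLeft x k, k), (k, altRight x n k)} := by
  rw [mem_Ioo] at hk
  have hL : IsAltOn x (altLeft x k) k := isAltOn_altLeft
  have hR : IsAltOn x k (altRight x n k) := isAltOn_altRight (by omega)
  have hLk : altLeft x k < k := altLeft_lt_self_iff.2 ⟨hk.1, hx.1⟩
  have hkR : k < altRight x n k := self_lt_altRight_iff.2 ⟨by omega, hx.2.1⟩
  have hRn : altRight x n k < n := altRight_le.trans_lt (by omega)
  have hend : ∀ i j, IsAltOn x i j → i ≤ k → k ≤ j → i = k ∨ j = k := by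
    intro i j h hik hkj
    by_contra hne
    exact hx.2.2 (h.eq_of_lt_of_lt (by omega) (by omega))
  ext ⟨i, j⟩
  simp only [mem_filter, mem_insert, mem_singleton, mem_altSegs_iff, Prod.mk.injEq]
  constructor
  · rintro ⟨⟨-, hjn, h, hmax⟩, hik, hkj⟩
    rcases hend i j h hik hkj with rfl | rfl
    · have := hmax _ _ le_rfl (le_altRight h le_rfl hjn) hRn hR
      omega
    · have := hmax _ _ (altLeft_le h le_rfl) le_rfl hjn hL
      omega
  · rintro (⟨rfl, rfl⟩ | ⟨rfl, rfl⟩)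
    · refine ⟨⟨hLk.le, by omega, hL, fun i' j' hi hj hjn h => ?_⟩, hLk.le, le_rfl⟩
      have := altLeft_le h hj
      have := hend i' j' h (by omega) hj
      omega
    · refine ⟨⟨hkR.le, hRn, hR, fun i' j' hi hj hjn h => ?_⟩, le_rfl, hkR.le⟩
      have := le_altRight h hi hjn
      have := hend i' j' h hi (by omega)
      omega

theorem card_filter_altSegs (hk : k < n) :
    #{p ∈ altSegs n x | p.1 ≤ k ∧ k ≤ p.2} =
      1 + if k ∈ Ioo 0 (n - 1) ∧ ThreeDistinctAt x k then 1 else 0 := by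
  split_ifs with h
  · have hLk : altLeft x k < k := altLeft_lt_self_iff.2 ⟨(mem_Ioo.1 h.1).1, h.2.1⟩
    rw [filter_altSegs_eq_pair h.1 h.2, card_pair]
    simp only [ne_eq, Prod.mk.injEq, not_and]
    omega
  · rw [filter_altSegs_eq_singleton hk, card_singleton]
    by_contra! hglue
    obtain ⟨hk0, h₁⟩ := altLeft_lt_self_iff.1 (altLeft_le_self.lt_of_ne hglue.1)
    obtain ⟨hkn, h₂⟩ := self_lt_altRight_iff.1 ((self_le_altRight hk).lt_of_ne' hglue.2.1)
    exact h ⟨mem_Ioo.2 ⟨hk0, by omega⟩, h₁, h₂, hglue.2.2⟩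

end Alternating

theorem sumLen_eq_add_card {m : ℕ} (n : ℕ) (x : ℕ → Fin m) :
    sumLen n x = n + #{k ∈ Ioo 0 (n - 1) | ThreeDistinctAt x k} := by
  calc sumLen n x = ∑ p ∈ altSegs n x, #{k ∈ range n | p.1 ≤ k ∧ k ≤ p.2} := by
        refine sum_congr rfl fun ⟨i, j⟩ hp => ?_
        obtain ⟨hij, hjn, -⟩ := mem_altSegs_iff.1 hp
        have : {k ∈ range n | i ≤ k ∧ k ≤ j} = Icc i j := by
          ext k
          simp only [mem_filter, mem_range, mem_Icc]
          omega
        rw [this, Nat.card_Icc]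
        omega
    _ = ∑ k ∈ range n, #{p ∈ altSegs n x | p.1 ≤ k ∧ k ≤ p.2} :=
        sum_card_bipartiteAbove_eq_sum_card_bipartiteBelow _
    _ = ∑ k ∈ range n, (1 + if k ∈ Ioo 0 (n - 1) ∧ ThreeDistinctAt x k then 1 else 0) :=
        sum_congr rfl fun k hk => card_filter_altSegs (mem_range.1 hk)
    _ = n + #{k ∈ Ioo 0 (n - 1) | ThreeDistinctAt x k} := by
        rw [sum_add_distrib, sum_const, card_range, smul_eq_mul, mul_one, sum_boole, Nat.cast_id]
        congr 2
        ext k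
        simp only [mem_filter, mem_range, mem_Ioo]
        exact ⟨fun h => h.2, fun h => ⟨by omega, h⟩⟩

theorem card_filter_injOn {ι α : Type*} [Fintype ι] [DecidableEq ι] [Fintype α]
    [DecidableEq α] (s : Finset ι) :
    #{y : ι → α | Set.InjOn y s} =
      (Fintype.card α).descFactorial #s * Fintype.card α ^ (Fintype.card ι - #s) := by
  rw [← Fintype.card_subtype]
  let e : {y : ι → α // Set.InjOn y s} ≃ (s ↪ α) × ({i // i ∉ s} → α) :=
    ((Equiv.piEquivPiSubtypeProd (· ∈ s) fun _ => α).subtypeEquiv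
      fun _ => Set.injOn_iff_injective).trans
      (Equiv.prodSubtypeFstEquivSubtypeProd.trans
        ((Equiv.subtypeInjectiveEquivEmbedding _ _).prodCongr (Equiv.refl _)))
  rw [Fintype.card_congr e, Fintype.card_prod, Fintype.card_embedding_eq, Fintype.card_fun,
    Fintype.card_subtype_compl, Fintype.card_coe]

theorem Set.injOn_triple_iff {ι α : Type*} {f : ι → α} {a b c : ι} (hab : a ≠ b) (hbc : b ≠ c)
    (hac : a ≠ c) : Set.InjOn f {a, b, c} ↔ f a ≠ f b ∧ f b ≠ f c ∧ f a ≠ f c := by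
  simp only [Set.injOn_insert (by simp [hab, hac] : a ∉ ({b, c} : Set ι)), Set.injOn_pair, hbc,
    Set.image_pair, Set.mem_insert_iff, Set.mem_singleton_iff]
  grind

theorem extWord_apply {m n i : ℕ} (hm : 0 < m) (y : Fin n → Fin m) (hi : i < n) :
    extWord n hm y i = y ⟨i, hi⟩ :=
  dif_pos hi

theorem card_threeDistinctAt_extWord {m n k : ℕ} (hm : 0 < m) (hk : k ∈ Ioo 0 (n - 1)) :
    #{y : Fin n → Fin m | ThreeDistinctAt (extWord n hm y) k} =
      m.descFactorial 3 * m ^ (n - 3) := by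
  rw [mem_Ioo] at hk
  let a : Fin n := ⟨k - 1, by omega⟩
  let b : Fin n := ⟨k, by omega⟩
  let c : Fin n := ⟨k + 1, by omega⟩
  have hab : a ≠ b := by simp [a, b, Fin.ext_iff]; omega
  have hbc : b ≠ c := by simp [b, c, Fin.ext_iff]
  have hac : a ≠ c := by simp [a, c, Fin.ext_iff]
  calc _ = #{y : Fin n → Fin m | Set.InjOn y ({a, b, c} : Finset (Fin n))} := by
        refine congrArg card (filter_congr fun y _ => ?_)
        rw [coe_insert, coe_pair, Set.injOn_triple_iff hab hbc hac]
        simp only [ThreeDistinctAt, extWord_apply hm y (show k - 1 < n by omega),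
          extWord_apply hm y (show k < n by omega), extWord_apply hm y (show k + 1 < n by omega)]
        rfl
    _ = _ := by
        rw [card_filter_injOn, card_eq_three.2 ⟨a, b, c, hab, hac, hbc, rfl⟩, Fintype.card_fin,
          Fintype.card_fin]

theorem sum_sumLen_extWord {m n : ℕ} (hm : 0 < m) :
    ∑ y : Fin n → Fin m, sumLen n (extWord n hm y) =
      n * m ^ n +
        ∑ k ∈ Ioo 0 (n - 1), #{y : Fin n → Fin m | ThreeDistinctAt (extWord n hm y) k} := by
  simp only [sumLen_eq_add_card]
  rw [sum_add_distrib, sum_const, card_univ, Fintype.card_fun, Fintype.card_fin,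
    Fintype.card_fin, smul_eq_mul, mul_comm]
  exact congrArg _ (sum_card_bipartiteAbove_eq_sum_card_bipartiteBelow _)

/-- For a uniformly random `x ∈ Z_m^n`, the expected value of the sum of the lengths of
the maximal alternating segments equals `n + (n-2)(m-1)(m-2)/m²`. -/
theorem stmt5 (n m : ℕ) (hn : 2 ≤ n) (hm : 2 ≤ m) :
    (∑ y : Fin n → Fin m, (sumLen n (extWord n (by omega) y) : ℝ)) / (m : ℝ) ^ n
      = (n : ℝ) + ((n : ℝ) - 2) * ((m : ℝ) - 1) * ((m : ℝ) - 2) / (m : ℝ) ^ 2 := by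
  have hm0 : 0 < m := by omega
  have hprob : ∀ k ∈ Ioo 0 (n - 1),
      (#{y : Fin n → Fin m | ThreeDistinctAt (extWord n hm0 y) k} : ℝ) =
        (m : ℝ) ^ n * (((m : ℝ) - 1) * ((m : ℝ) - 2) / (m : ℝ) ^ 2) := by
    intro k hk
    have h3 : 3 ≤ n := by rw [mem_Ioo] at hk; omega
    rw [card_threeDistinctAt_extWord hm0 hk, ← pow_sub_mul_pow (m : ℝ) h3,
      show m.descFactorial 3 = m * (m - 1) * (m - 2) by simp [Nat.descFactorial]; ring]
    push_cast [Nat.cast_sub hm, Nat.cast_sub hm0]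
    field_simp
  rw [← Nat.cast_sum, sum_sumLen_extWord hm0, Nat.cast_add, Nat.cast_sum, sum_congr rfl hprob,
    sum_const, Nat.card_Ioo, show n - 1 - 0 - 1 = n - 2 by omega, nsmul_eq_mul,
    Nat.cast_sub hn]
  field_simp
  push_cast
  ring
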